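/- arXiv:2510.00456 — 4 statements merged into one kernel-verified Lean document; each statement's English description precedes it below -/
import Mathlib

section
/- For any positive integer n and any real k with 0 < k < 1, Γ(kn + 1) ≥ k^n (n!)^k. -/
open Real

lemma aux_gamma (k : ℝ) (hk0 : 0 < k) (hk1 : k < 1) : ∀ n : ℕ,
    Real.Gamma (k * n + 1) ≥ k ^ n * ((Nat.factorial n : ℝ)) ^ k := by
  intro n
  induction n with
  | zero => simp [Real.Gamma_one]
  | succ n ih =>
    set x : ℝ := k * (n + 1) with hx
    have hxpos : 0 < x := by positivity
    have hΓx : 0 < Real.Gamma x := Real.Gamma_pos_of_pos hxpos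
    have hΓy : 0 < Real.Gamma (k * n + 1) := Real.Gamma_pos_of_pos (by positivity)
    have h1 : Real.Gamma (x + 1) = x * Real.Gamma x := Real.Gamma_add_one hxpos.ne'
    have hconv := Real.convexOn_log_Gamma.2 (Set.mem_Ioi.2 hxpos)
      (Set.mem_Ioi.2 (by positivity : (0:ℝ) < x + 1)) hk0.le
      (by linarith : (0:ℝ) ≤ 1 - k) (by ring)
    have hcomb : k • x + (1 - k) • (x + 1) = k * n + 1 := by
      simp only [smul_eq_mul]; ring
    rw [hcomb] at hconv
    simp only [Function.comp_apply] at hconv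
    rw [h1, Real.log_mul hxpos.ne' hΓx.ne'] at hconv
    have hA : Real.Gamma (k * n + 1) ≤ Real.Gamma x * x ^ (1 - k) := by
      rw [← Real.log_le_log_iff hΓy (by positivity),
        Real.log_mul hΓx.ne' (by positivity), Real.log_rpow hxpos]
      simp only [smul_eq_mul] at hconv
      nlinarith [hconv]
    have hB : x ^ k * Real.Gamma (k * n + 1) ≤ x * Real.Gamma x := by
      calc x ^ k * Real.Gamma (k * n + 1) ≤ x ^ k * (Real.Gamma x * x ^ (1 - k)) := by
            apply mul_le_mul_of_nonneg_left hA (by positivity)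
        _ = Real.Gamma x * (x ^ k * x ^ (1 - k)) := by ring
        _ = x * Real.Gamma x := by
            rw [← Real.rpow_add hxpos]
            norm_num
            ring
    have hxk : x ^ k ≥ k * ((n : ℝ) + 1) ^ k := by
      rw [hx, Real.mul_rpow hk0.le (by positivity)]
      have : k ^ k ≥ k ^ (1:ℝ) :=
        Real.rpow_le_rpow_of_exponent_ge hk0 hk1.le hk1.le
      rw [Real.rpow_one] at this
      have hnk : (0:ℝ) < ((n:ℝ)+1) ^ k := by positivity
      nlinarith
    have hfact : ((Nat.factorial (n+1) : ℝ)) ^ k = ((n:ℝ)+1) ^ k * ((Nat.factorial n : ℝ)) ^ k := by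
      rw [← Real.mul_rpow (by positivity) (by positivity)]
      congr 1
      rw [Nat.factorial_succ]
      push_cast
      ring
    have hgoal : Real.Gamma (x + 1) ≥ k ^ (n+1) * ((Nat.factorial (n+1) : ℝ)) ^ k := by
      rw [h1, hfact]
      calc x * Real.Gamma x ≥ x ^ k * Real.Gamma (k * n + 1) := hB
        _ ≥ (k * ((n:ℝ)+1) ^ k) * (k ^ n * ((Nat.factorial n : ℝ)) ^ k) := by
            apply mul_le_mul hxk ih (by positivity) (by positivity)
        _ = k ^ (n+1) * (((n:ℝ)+1) ^ k * ((Nat.factorial n : ℝ)) ^ k) := by ring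
    have : k * ((n:ℕ)+1 : ℝ) + 1 = x + 1 := by rw [hx]
    push_cast
    push_cast at hgoal
    linarith [hgoal]

theorem stmt1 (n : ℕ) (hn : 0 < n) (k : ℝ) (hk0 : 0 < k) (hk1 : k < 1) :
    Real.Gamma (k * n + 1) ≥ k ^ n * ((Nat.factorial n : ℝ)) ^ k :=
  aux_gamma k hk0 hk1 n
end

section
/- Let c, β, α, γ be real numbers with c > 0, β > 0, α > −1, and 1 + α + γβ < 0. Then ∫₀^∞ a^α (c + a^β)^γ da = β^{-1} c^{(1+α+γβ)/β} B((1+α)/β, −(1+α+γβ)/β), where B is the Beta function. -/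
/-!
Substituting `y = a ^ β` turns the integral into `β⁻¹ ∫₀^∞ y^(u-1) (c + y)^(-(u+v))` with
`u = (1+α)/β` and `v = -(1+α+γβ)/β`, both positive by the hypotheses. Scaling `y = c t` pulls out
`c^(-v)`, and the Möbius substitution `x = t / (1 + t)` maps `(0, ∞)` onto `(0, 1)`, turning
`∫₀^∞ t^(u-1) (1 + t)^(-(u+v)) dt` into Euler's Beta integral `∫₀¹ x^(u-1) (1 - x)^(v-1) dx`.
-/

open MeasureTheory Set Real ProbabilityTheory

lemma integral_rpow_mul_one_sub_rpow_eq_beta {u v : ℝ} (hu : 0 < u) (hv : 0 < v) :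
    ∫ x in (0 : ℝ)..1, x ^ (u - 1) * (1 - x) ^ (v - 1) = beta u v := by
  have hbeta : Complex.betaIntegral u v =
      ((∫ x in (0 : ℝ)..1, x ^ (u - 1) * (1 - x) ^ (v - 1) : ℝ) : ℂ) := by
    rw [Complex.betaIntegral, ← intervalIntegral.integral_ofReal]
    refine intervalIntegral.integral_congr fun x hx => ?_
    rw [uIcc_of_le zero_le_one] at hx
    push_cast
    rw [Complex.ofReal_cpow hx.1, Complex.ofReal_cpow (sub_nonneg.2 hx.2)]
    push_cast
    ring
  have hGamma := Complex.betaIntegral_eq_Gamma_mul_div u v (by simpa using hu) (by simpa using hv)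
  rw [hbeta, ← Complex.ofReal_add, Complex.Gamma_ofReal, Complex.Gamma_ofReal,
    Complex.Gamma_ofReal] at hGamma
  exact_mod_cast hGamma

lemma integral_Ioi_rpow_mul_one_add_rpow_neg_eq_beta {u v : ℝ} (hu : 0 < u) (hv : 0 < v) :
    ∫ t in Ioi (0 : ℝ), t ^ (u - 1) * (1 + t) ^ (-(u + v)) = beta u v := by
  rw [← integral_rpow_mul_one_sub_rpow_eq_beta hu hv,
    intervalIntegral.integral_of_le zero_le_one, integral_Ioc_eq_integral_Ioo]
  have himage : (fun t : ℝ => t / (1 + t)) '' Ioi 0 = Ioo 0 1 := by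
    ext x
    constructor
    · rintro ⟨t, ht, rfl⟩
      have h1 : (0 : ℝ) < 1 + t := by linarith [mem_Ioi.1 ht]
      exact ⟨div_pos ht h1, (div_lt_one h1).2 (by linarith)⟩
    · rintro ⟨hx0, hx1⟩
      refine ⟨x / (1 - x), div_pos hx0 (by linarith), ?_⟩
      have h1 : (1 : ℝ) - x ≠ 0 := by linarith
      field_simp
      ring
  have hderiv : ∀ t ∈ Ioi (0 : ℝ),
      HasDerivWithinAt (fun t : ℝ => t / (1 + t)) ((1 + t) ^ (-2 : ℝ)) (Ioi 0) t := by
    intro t ht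
    have h1 : (1 : ℝ) + t ≠ 0 := by linarith [mem_Ioi.1 ht]
    have hquot := (hasDerivAt_id t).div ((hasDerivAt_id t).const_add 1) h1
    rw [show (1 + t) ^ (-2 : ℝ) = (1 * (1 + t) - t * 1) / (1 + t) ^ 2 by
      rw [rpow_neg (by linarith [mem_Ioi.1 ht]), rpow_two]; ring]
    exact hquot.hasDerivWithinAt
  have hinj : InjOn (fun t : ℝ => t / (1 + t)) (Ioi 0) := by
    intro a ha b hb hab
    have h1 : (1 : ℝ) + a ≠ 0 := by linarith [mem_Ioi.1 ha]
    have h2 : (1 : ℝ) + b ≠ 0 := by linarith [mem_Ioi.1 hb]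
    field_simp at hab
    linarith
  rw [← himage, integral_image_eq_integral_abs_deriv_smul measurableSet_Ioi hderiv hinj]
  refine setIntegral_congr_fun measurableSet_Ioi fun t ht => ?_
  have h1 : (0 : ℝ) < 1 + t := by linarith [mem_Ioi.1 ht]
  have hsub : (1 : ℝ) - t / (1 + t) = (1 + t)⁻¹ := by field_simp; ring
  rw [smul_eq_mul, abs_of_pos (rpow_pos_of_pos h1 _), hsub, div_rpow (le_of_lt ht) h1.le,
    inv_rpow h1.le, ← rpow_neg h1.le, div_eq_mul_inv, ← rpow_neg h1.le,
    show -(u + v) = -2 + (-(u - 1) + -(v - 1)) by ring, rpow_add h1, rpow_add h1]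
  ring

lemma integral_Ioi_rpow_mul_add_rpow_neg_eq_beta {c u v : ℝ} (hc : 0 < c) (hu : 0 < u)
    (hv : 0 < v) :
    ∫ y in Ioi (0 : ℝ), y ^ (u - 1) * (c + y) ^ (-(u + v)) = c ^ (-v) * beta u v := by
  have hscale := integral_comp_mul_left_Ioi (fun y => y ^ (u - 1) * (c + y) ^ (-(u + v))) 0 hc
  rw [mul_zero, smul_eq_mul, eq_inv_mul_iff_mul_eq₀ hc.ne'] at hscale
  rw [← hscale]
  have hpointwise : ∀ t ∈ Ioi (0 : ℝ), (c * t) ^ (u - 1) * (c + c * t) ^ (-(u + v)) =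
      c ^ (u - 1 + -(u + v)) * (t ^ (u - 1) * (1 + t) ^ (-(u + v))) := fun t ht => by
    rw [mul_rpow hc.le (le_of_lt ht), show c + c * t = c * (1 + t) by ring,
      mul_rpow hc.le (by linarith [mem_Ioi.1 ht]), rpow_add hc]
    ring
  have hexponent : c * c ^ (u - 1 + -(u + v)) = c ^ (-v) := by
    rw [← rpow_one_add' hc.le (ne_of_lt (by linarith))]
    ring_nf
  rw [setIntegral_congr_fun measurableSet_Ioi hpointwise, integral_const_mul,
    integral_Ioi_rpow_mul_one_add_rpow_neg_eq_beta hu hv, ← mul_assoc, hexponent]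

lemma integral_Ioi_rpow_mul_comp_rpow {α β : ℝ} (hβ : β ≠ 0) (f : ℝ → ℝ) :
    ∫ a in Ioi (0 : ℝ), a ^ α * f (a ^ β) =
      |β|⁻¹ * ∫ y in Ioi (0 : ℝ), y ^ ((1 + α) / β - 1) * f y := by
  rw [← integral_comp_rpow_Ioi (fun y => y ^ ((1 + α) / β - 1) * f y) hβ,
    ← integral_const_mul]
  refine setIntegral_congr_fun measurableSet_Ioi fun a ha => ?_
  have hsplit : a ^ (β - 1) * (a ^ β) ^ ((1 + α) / β - 1) = a ^ α := by
    rw [← rpow_mul (le_of_lt ha), ← rpow_add ha]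
    congr 1
    field_simp
    ring
  rw [smul_eq_mul, ← hsplit]
  field_simp

theorem stmt3 (c β α γ : ℝ) (hc : 0 < c) (hβ : 0 < β) (hα : -1 < α)
    (h : 1 + α + γ * β < 0) :
    ∫ a in Set.Ioi (0 : ℝ), a ^ α * (c + a ^ β) ^ γ =
      β⁻¹ * c ^ ((1 + α + γ * β) / β) *
        (Real.Gamma ((1 + α) / β) * Real.Gamma (-(1 + α + γ * β) / β) /
          Real.Gamma ((1 + α) / β + -(1 + α + γ * β) / β)) := by
  set u := (1 + α) / β with hu_def
  set v := -(1 + α + γ * β) / β with hv_def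
  have hu : 0 < u := div_pos (by linarith) hβ
  have hv : 0 < v := div_pos (by linarith) hβ
  have hγ : γ = -(u + v) := by
    rw [hu_def, hv_def]
    field_simp
    ring
  have hcv : (1 + α + γ * β) / β = -v := by
    rw [hv_def]
    ring
  rw [integral_Ioi_rpow_mul_comp_rpow hβ.ne' (fun y => (c + y) ^ γ), abs_of_pos hβ, hcv,
    mul_assoc, hγ, integral_Ioi_rpow_mul_add_rpow_neg_eq_beta hc hu hv, beta]
end

section
/- Let {X_n} be a sequence of random variables and p a positive integer. If there exists a real number r such that E[X_n^{2p−q} X_m^{q}] → r as m, n → ∞ for every q with 0 ≤ q ≤ 2p, then X_n converges in L^{2p}(Ω). -/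
/-!
For even `n = 2p`, `|X_n - X_m| ^ n = (X_n - X_m) ^ n` expands binomially into the mixed moments,
so `E |X_n - X_m| ^ n` tends to `r (1 - 1) ^ n = 0`. Hence `(X_n)` is Cauchy in `L^n`, which is
complete.
-/

open MeasureTheory Filter Finset Topology

lemma pow_mul_pow_le_pow_add_pow {x y : ℝ} (hx : 0 ≤ x) (hy : 0 ≤ y) (a b : ℕ) :
    x ^ a * y ^ b ≤ x ^ (a + b) + y ^ (a + b) := by
  calc x ^ a * y ^ b ≤ max x y ^ a * max x y ^ b := by
        gcongr
        exacts [le_max_left x y, le_max_right x y]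
    _ = max x y ^ (a + b) := (pow_add _ _ _).symm
    _ ≤ x ^ (a + b) + y ^ (a + b) := by
        rcases max_choice x y with h | h <;> rw [h] <;> simp [pow_nonneg, hx, hy]

lemma tendsto_nhds_zero_of_tendsto_pow {ι : Type*} {l : Filter ι} {a : ι → ℝ}
    (ha : ∀ i, 0 ≤ a i) {n : ℕ} (hn : n ≠ 0) (h : Tendsto (fun i => a i ^ n) l (𝓝 0)) :
    Tendsto a l (𝓝 0) := by
  have := h.rpow_const (p := (n⁻¹ : ℝ)) (Or.inr (by positivity))
  simpa [Real.pow_rpow_inv_natCast (ha _) hn, Real.zero_rpow (by positivity : (n⁻¹ : ℝ) ≠ 0)]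
    using this

lemma exists_tendsto_norm_sub_pow_of_cauchy {E : Type*} [NormedAddCommGroup E] [CompleteSpace E]
    {u : ℕ → E} {n : ℕ} (hn : n ≠ 0)
    (h : Tendsto (fun ij : ℕ × ℕ => ‖u ij.1 - u ij.2‖ ^ n) atTop (𝓝 0)) :
    ∃ v, Tendsto (fun i => ‖u i - v‖ ^ n) atTop (𝓝 0) := by
  have hu : CauchySeq u := by
    rw [cauchySeq_iff_tendsto_dist_atTop_0]
    simpa only [dist_eq_norm] using
      tendsto_nhds_zero_of_tendsto_pow (fun _ => norm_nonneg _) hn h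
  obtain ⟨v, hv⟩ := cauchySeq_tendsto_of_complete hu
  refine ⟨v, ?_⟩
  simpa [zero_pow hn] using (tendsto_iff_norm_sub_tendsto_zero.mp hv).pow n

section
variable {α : Type*} {m : MeasurableSpace α} {μ : Measure α}

lemma MemLp.norm_toLp_pow {E : Type*} [NormedAddCommGroup E] {n : ℕ} (hn : n ≠ 0)
    {f : α → E} (hf : MemLp f n μ) : ‖hf.toLp f‖ ^ n = ∫ x, ‖f x‖ ^ n ∂μ := by
  have h := lpNorm_nnreal_eq_integral_norm_rpow (p := (n : NNReal)) (by exact_mod_cast hn) hf.1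
  simp only [ENNReal.coe_natCast, NNReal.coe_natCast, Real.rpow_natCast] at h
  rw [Lp.norm_toLp, toReal_eLpNorm hf.1, h,
    Real.rpow_inv_natCast_pow (integral_nonneg fun _ => by positivity) hn]

lemma MemLp.integrable_pow_mul_pow {f g : α → ℝ} {a b : ℕ} (hab : a + b ≠ 0)
    (hf : MemLp f (a + b : ℕ) μ) (hg : MemLp g (a + b : ℕ) μ) :
    Integrable (fun x => f x ^ a * g x ^ b) μ := by
  refine ((hf.integrable_norm_pow hab).add (hg.integrable_norm_pow hab)).mono'
    ((hf.1.pow a).mul (hg.1.pow b)) (ae_of_all _ fun x => ?_)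
  simpa only [norm_mul, norm_pow, Real.norm_eq_abs, Pi.add_apply] using
    pow_mul_pow_le_pow_add_pow (abs_nonneg (f x)) (abs_nonneg (g x)) a b

lemma integral_abs_sub_pow_eq_sum {f g : α → ℝ} {n : ℕ} (hn : Even n) (hn0 : n ≠ 0)
    (hf : MemLp f n μ) (hg : MemLp g n μ) :
    ∫ x, |f x - g x| ^ n ∂μ =
      ∑ k ∈ range (n + 1), (-1) ^ (k + n) * n.choose k * ∫ x, f x ^ k * g x ^ (n - k) ∂μ := by
  have hint : ∀ k ∈ range (n + 1), Integrable (fun x => f x ^ k * g x ^ (n - k)) μ := by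
    intro k hk
    have hkn : n = k + (n - k) := by grind
    rw [hkn] at hf hg
    exact MemLp.integrable_pow_mul_pow (by omega) hf hg
  calc ∫ x, |f x - g x| ^ n ∂μ
      = ∫ x, ∑ k ∈ range (n + 1), (-1) ^ (k + n) * n.choose k * (f x ^ k * g x ^ (n - k)) ∂μ := by
        congr 1 with x
        rw [hn.pow_abs, sub_pow]
        exact sum_congr rfl fun k _ => by ring
    _ = _ := by
        rw [integral_finsetSum _ fun k hk => (hint k hk).const_mul _]
        simp only [integral_const_mul]

lemma tendsto_integral_abs_sub_pow_of_tendsto_mixed_moments {ι : Type*} {l : Filter ι}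
    {F G : ι → α → ℝ} {n : ℕ} (hn : Even n) (hn0 : n ≠ 0)
    (hF : ∀ i, MemLp (F i) n μ) (hG : ∀ i, MemLp (G i) n μ) {r : ℝ}
    (h : ∀ q ≤ n, Tendsto (fun i => ∫ x, F i x ^ (n - q) * G i x ^ q ∂μ) l (𝓝 r)) :
    Tendsto (fun i => ∫ x, |F i x - G i x| ^ n ∂μ) l (𝓝 0) := by
  simp_rw [fun i => integral_abs_sub_pow_eq_sum hn hn0 (hF i) (hG i)]
  have hterm : ∀ k ∈ range (n + 1), Tendsto
      (fun i => (-1) ^ (k + n) * n.choose k * ∫ x, F i x ^ k * G i x ^ (n - k) ∂μ) l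
      (𝓝 ((-1 : ℝ) ^ (k + n) * n.choose k * r)) := by
    intro k hk
    have hkn : n - (n - k) = k := by grind
    simpa only [hkn] using
      (h (n - k) (Nat.sub_le n k)).const_mul ((-1 : ℝ) ^ (k + n) * n.choose k)
  have hlim : ∑ k ∈ range (n + 1), (-1 : ℝ) ^ (k + n) * n.choose k * r = 0 := by
    rw [← sum_mul, ← mul_zero r, mul_comm]
    convert congrArg (r * ·) (sub_pow (1 : ℝ) 1 n).symm using 2
    · simp
    · simp [hn0]
  simpa only [hlim] using tendsto_finsetSum _ hterm

end

theorem stmt6_general {Ω : Type*} {mΩ : MeasurableSpace Ω} {μ : Measure Ω}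
    (X : ℕ → Ω → ℝ) (p : ℕ) (hp : 0 < p)
    (hmom : ∀ n, MemLp (X n) ((2 * p : ℕ) : ENNReal) μ)
    (r : ℝ)
    (hconv : ∀ q ≤ 2 * p,
      Tendsto (fun nm : ℕ × ℕ => ∫ ω, (X nm.1 ω) ^ (2 * p - q) * (X nm.2 ω) ^ q ∂μ)
        atTop (nhds r)) :
    ∃ Y : Ω → ℝ,
      Tendsto (fun n => ∫ ω, |X n ω - Y ω| ^ (2 * p) ∂μ) atTop (nhds 0) := by
  have hp0 : 2 * p ≠ 0 := by omega
  have : Fact (1 ≤ ((2 * p : ℕ) : ENNReal)) := ⟨by exact_mod_cast Nat.one_le_iff_ne_zero.mpr hp0⟩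
  have hnorm : ∀ {f g : Ω → ℝ} (hf : MemLp f (2 * p : ℕ) μ) (hg : MemLp g (2 * p : ℕ) μ),
      ‖hf.toLp f - hg.toLp g‖ ^ (2 * p) = ∫ ω, |f ω - g ω| ^ (2 * p) ∂μ := fun hf hg => by
    simp only [← MemLp.toLp_sub, MemLp.norm_toLp_pow hp0, Pi.sub_apply, Real.norm_eq_abs]
  have hcauchy := tendsto_integral_abs_sub_pow_of_tendsto_mixed_moments (even_two_mul p) hp0
    (fun nm : ℕ × ℕ => hmom nm.1) (fun nm => hmom nm.2) hconv
  obtain ⟨Y, hY⟩ := exists_tendsto_norm_sub_pow_of_cauchy (u := fun n => (hmom n).toLp (X n)) hp0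
    (hcauchy.congr fun nm => (hnorm (hmom nm.1) (hmom nm.2)).symm)
  refine ⟨Y, hY.congr fun n => ?_⟩
  rw [← hnorm (hmom n) (Lp.memLp Y), Lp.toLp_coeFn]

theorem stmt6 {Ω : Type*} {mΩ : MeasurableSpace Ω} {μ : Measure Ω}
    [IsProbabilityMeasure μ]
    (X : ℕ → Ω → ℝ) (p : ℕ) (hp : 0 < p)
    (hmom : ∀ n, MemLp (X n) ((2 * p : ℕ) : ENNReal) μ)
    (r : ℝ)
    (hconv : ∀ q ≤ 2 * p,
      Tendsto (fun nm : ℕ × ℕ => ∫ ω, (X nm.1 ω) ^ (2 * p - q) * (X nm.2 ω) ^ q ∂μ)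
        atTop (nhds r)) :
    ∃ Y : Ω → ℝ,
      Tendsto (fun n => ∫ ω, |X n ω - Y ω| ^ (2 * p) ∂μ) atTop (nhds 0) :=
  stmt6_general (mΩ := mΩ) X p hp hmom r hconv
end

section
/- Let n, d be positive integers and |k| a positive even integer. Then ∫_{ℝ^{nd}} e^{−½ Σ_{j=1}^d Σ_{m=1}^n v_{mj}²} |Σ_{m=1}^d Σ_{j=1}^n v_{jm}²|^{n|k|/2} dv ≤ C_{d,|k|}^n (n!)^{|k|} for some constant C_{d,|k|} > 0 depending only on d and |k|. -/
/-!
For `x ≥ 0`, `(x / 4) ^ M / M ! ≤ exp (x / 4)` gives `exp (-x / 2) * x ^ M ≤ 4 ^ M * M ! * exp (-x / 4)`.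
The Gaussian `exp (-|v|² / 4)` factors over the `n * d` coordinates and integrates to
`(4π) ^ (n * d / 2) ≤ 4 ^ (n * d)`. Finally, with `M = n * k / 2 ≤ n * k`,
`M ! ≤ (n * k) ^ (n * k) = (k ^ k) ^ n * (n ^ n) ^ k` and `n ^ n ≤ e ^ n * n !`.
-/

open MeasureTheory Real Nat

theorem pow_le_factorial_mul_exp (M : ℕ) {x : ℝ} (hx : 0 ≤ x) : x ^ M ≤ M ! * exp x := by
  have := pow_div_factorial_le_exp x hx M
  rwa [div_le_iff₀ (by positivity), mul_comm] at this

theorem exp_neg_div_two_mul_pow_le (M : ℕ) {x : ℝ} (hx : 0 ≤ x) :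
    exp (-x / 2) * x ^ M ≤ 4 ^ M * M ! * exp (-(1 / 4) * x) :=
  calc exp (-x / 2) * x ^ M = exp (-x / 2) * (4 ^ M * (x / 4) ^ M) := by
        rw [← mul_pow]; ring_nf
    _ ≤ exp (-x / 2) * (4 ^ M * (M ! * exp (x / 4))) := by
        gcongr; exact pow_le_factorial_mul_exp M (by positivity)
    _ = 4 ^ M * M ! * exp (-(1 / 4) * x) := by
        rw [show -(1 / 4) * x = -x / 2 + x / 4 by ring, exp_add]; ring

theorem pow_self_le_three_pow_mul_factorial (n : ℕ) : n ^ n ≤ 3 ^ n * n ! := by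
  have h := pow_le_factorial_mul_exp n (Nat.cast_nonneg (α := ℝ) n)
  have he : exp (n : ℝ) ≤ 3 ^ n := by
    rw [← exp_one_pow]
    exact pow_le_pow_left₀ (exp_pos 1).le (exp_one_lt_d9.le.trans (by norm_num)) n
  have : (n : ℝ) ^ n ≤ 3 ^ n * n ! := by nlinarith [Nat.cast_nonneg (α := ℝ) n !]
  exact_mod_cast this

theorem four_pow_mul_factorial_le {M n k : ℕ} (hM : M ≤ n * k) :
    4 ^ M * M ! ≤ (12 ^ k * k ^ k) ^ n * n ! ^ k :=
  calc 4 ^ M * M ! ≤ 4 ^ (n * k) * (n * k) ^ (n * k) := by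
        gcongr
        · norm_num
        · exact (Nat.factorial_le hM).trans (Nat.factorial_le_pow _)
    _ = (4 ^ k * k ^ k) ^ n * (n ^ n) ^ k := by ring
    _ ≤ (4 ^ k * k ^ k) ^ n * (3 ^ n * n !) ^ k := by
        gcongr; exact pow_self_le_three_pow_mul_factorial n
    _ = (12 ^ k * k ^ k) ^ n * n ! ^ k := by
        rw [show (12 : ℕ) ^ k = 4 ^ k * 3 ^ k by rw [← mul_pow]; rfl]; ring

section Gaussian

variable {ι : Type*} [Fintype ι]

theorem exp_neg_mul_sum_sq (b : ℝ) (v : ι → ℝ) :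
    exp (-b * ∑ i, v i ^ 2) = ∏ i, exp (-b * v i ^ 2) := by
  rw [← exp_sum, Finset.mul_sum]

theorem integrable_exp_neg_mul_sum_sq {b : ℝ} (hb : 0 < b) :
    Integrable fun v : ι → ℝ => exp (-b * ∑ i, v i ^ 2) := by
  simp only [exp_neg_mul_sum_sq]
  exact Integrable.fintype_prod (f := fun _ t => exp (-b * t ^ 2))
    fun _ => integrable_exp_neg_mul_sq hb

theorem integral_exp_neg_mul_sum_sq (b : ℝ) :
    ∫ v : ι → ℝ, exp (-b * ∑ i, v i ^ 2) = √(π / b) ^ Fintype.card ι := by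
  simp only [exp_neg_mul_sum_sq]
  rw [integral_fintype_prod_volume_eq_pow (fun t => exp (-b * t ^ 2)), integral_gaussian]

theorem integral_exp_neg_quarter_mul_sum_sq_le :
    ∫ v : ι → ℝ, exp (-(1 / 4) * ∑ i, v i ^ 2) ≤ 4 ^ Fintype.card ι := by
  rw [integral_exp_neg_mul_sum_sq]
  gcongr
  rw [sqrt_le_left (by norm_num)]
  linarith [pi_le_four]

end Gaussian

theorem stmt17_general (d k : ℕ) :
    ∃ C > 0, ∀ n : ℕ, 0 < n →
      (∫ v : Fin n × Fin d → ℝ,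
          Real.exp (-(∑ p, (v p) ^ 2) / 2) * (∑ p, (v p) ^ 2) ^ (n * k / 2)) ≤
        C ^ n * (Nat.factorial n : ℝ) ^ k := by
  refine ⟨4 ^ d * (12 ^ k * k ^ k : ℕ), by have := k.pow_self_pos; positivity, fun n _ => ?_⟩
  set M := n * k / 2
  have hsq (v : Fin n × Fin d → ℝ) : 0 ≤ ∑ p, v p ^ 2 := by positivity
  calc (∫ v : Fin n × Fin d → ℝ, exp (-(∑ p, v p ^ 2) / 2) * (∑ p, v p ^ 2) ^ M)
      ≤ ∫ v : Fin n × Fin d → ℝ, 4 ^ M * M ! * exp (-(1 / 4) * ∑ p, v p ^ 2) :=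
        integral_mono_of_nonneg (.of_forall fun v => by have := hsq v; positivity)
          ((integrable_exp_neg_mul_sum_sq (by norm_num)).const_mul _)
          (.of_forall fun v => exp_neg_div_two_mul_pow_le M (hsq v))
    _ ≤ 4 ^ M * M ! * 4 ^ (n * d) := by
        rw [integral_const_mul]
        gcongr
        simpa using integral_exp_neg_quarter_mul_sum_sq_le (ι := Fin n × Fin d)
    _ ≤ (4 ^ d * (12 ^ k * k ^ k : ℕ)) ^ n * n ! ^ k := by
        have := four_pow_mul_factorial_le (M := M) (n := n) (k := k) (Nat.div_le_self _ _)
        calc (4 : ℝ) ^ M * M ! * 4 ^ (n * d) = 4 ^ M * M ! * (4 ^ d) ^ n := by ring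
          _ ≤ (12 ^ k * k ^ k : ℕ) ^ n * n ! ^ k * (4 ^ d) ^ n := by
              gcongr ?_ * _; exact_mod_cast this
          _ = _ := by ring

theorem stmt17 (d k : ℕ) (hd : 0 < d) (hk : 0 < k) (hke : Even k) :
    ∃ C > 0, ∀ n : ℕ, 0 < n →
      (∫ v : Fin n × Fin d → ℝ,
          Real.exp (-(∑ p, (v p) ^ 2) / 2) * (∑ p, (v p) ^ 2) ^ (n * k / 2)) ≤
        C ^ n * (Nat.factorial n : ℝ) ^ k :=
  stmt17_general d k
end
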